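/- arXiv:2011.10635 — 3 statements merged into one kernel-verified Lean document; each statement's English description precedes it below -/
import Mathlib

section
/- Let R ∈ SO(3) and let M be a 3×3 real symmetric positive-definite matrix. Then Tr((I₃ − R)M) ≥ 0, and Tr((I₃ − R)M) = 0 if and only if R = I₃. Consequently the error e_R = (1/4)·Tr((I₃ − R)M) is strictly positive for all R ≠ I₃ and vanishes only at R = I₃. -/
/-!
For orthogonal `R` and symmetric `M`, `(1 - R)ᵀ (1 - R) = 2 - R - Rᵀ` and `tr (Rᵀ M) = tr (R M)`,
so `2 tr ((1 - R) M) = tr ((1 - R) M (1 - R)ᵀ)`. The right-hand side is the trace of a positive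
semidefinite matrix, hence nonnegative, and it vanishes only if `(1 - R) M (1 - R)ᵀ = 0`, which for
positive definite `M` forces `1 - R = 0`.
-/

open Matrix

noncomputable section

/-- The special orthogonal group SO(3): real 3×3 matrices with
`R * Rᵀ = Rᵀ * R = I₃` and `det R = 1`. -/
def SO3 (R : Matrix (Fin 3) (Fin 3) ℝ) : Prop :=
  R * Rᵀ = 1 ∧ Rᵀ * R = 1 ∧ R.det = 1

/-- The skew-symmetric matrix `[a]ₓ` associated to `a ∈ ℝ³`, satisfying
`[a]ₓ b = a × b`. -/
def skew (a : Fin 3 → ℝ) : Matrix (Fin 3) (Fin 3) ℝ :=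
  !![0, -a 2, a 1; a 2, 0, -a 0; -a 1, a 0, 0]

/-- Anti-symmetric projection `P_a(X) = (X - Xᵀ)/2`. -/
def Pa (X : Matrix (Fin 3) (Fin 3) ℝ) : Matrix (Fin 3) (Fin 3) ℝ :=
  (1 / 2 : ℝ) • (X - Xᵀ)

/-- The `vex` map, inverse of `skew` on skew-symmetric matrices. -/
def vex (X : Matrix (Fin 3) (Fin 3) ℝ) : Fin 3 → ℝ :=
  ![X 2 1, X 0 2, X 1 0]

/-- Normalized Euclidean distance `‖A‖_I = (1/4)·Tr(I₃ − A)`. -/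
def normI (A : Matrix (Fin 3) (Fin 3) ℝ) : ℝ :=
  (1 / 4 : ℝ) * Matrix.trace (1 - A)

open scoped ComplexOrder

namespace Matrix

variable {n m 𝕜 : Type*} [Fintype n] [Fintype m]

lemma PosDef.eq_zero_of_mul_mul_conjTranspose_eq_zero {α : Type*} [CommRing α] [PartialOrder α]
    [StarRing α] {M : Matrix n n α} (hM : M.PosDef) {N : Matrix m n α}
    (h : N * M * Nᴴ = 0) : N = 0 := by
  classical
  rw [← conjTranspose_eq_zero]
  refine ext_of_mulVec_single fun i => ?_
  rw [zero_mulVec]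
  by_contra hx
  have hpos := hM.dotProduct_mulVec_pos hx
  rw [star_mulVec, dotProduct_mulVec, vecMul_vecMul, ← dotProduct_mulVec, mulVec_mulVec,
    conjTranspose_conjTranspose, h] at hpos
  simp at hpos

lemma PosDef.trace_mul_mul_conjTranspose_eq_zero_iff [RCLike 𝕜] {M : Matrix n n 𝕜}
    (hM : M.PosDef) (N : Matrix m n 𝕜) : (N * M * Nᴴ).trace = 0 ↔ N = 0 := by
  rw [(hM.posSemidef.mul_mul_conjTranspose_same N).trace_eq_zero_iff]
  exact ⟨hM.eq_zero_of_mul_mul_conjTranspose_eq_zero, by rintro rfl; simp⟩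

variable [DecidableEq n]

lemma two_mul_trace_one_sub_mul_eq {R M : Matrix n n ℝ} (hR : Rᵀ * R = 1) (hM : M.IsSymm) :
    2 * ((1 - R) * M).trace = ((1 - R) * M * (1 - R)ᵀ).trace := by
  have hRt : (Rᵀ * M).trace = (R * M).trace := by
    rw [← trace_transpose, transpose_mul, transpose_transpose, hM.eq, trace_mul_comm]
  rw [trace_mul_cycle, transpose_sub, transpose_one,
    show (1 - Rᵀ) * (1 - R) = 1 + 1 - R - Rᵀ by noncomm_ring [hR]]
  simp only [sub_mul, add_mul, one_mul, trace_sub, trace_add, hRt]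
  ring

theorem trace_one_sub_orthogonal_mul_posDef {R M : Matrix n n ℝ} (hR : Rᵀ * R = 1)
    (hM : M.PosDef) : 0 ≤ ((1 - R) * M).trace ∧ (((1 - R) * M).trace = 0 ↔ R = 1) := by
  have htwice := two_mul_trace_one_sub_mul_eq hR (isHermitian_iff_isSymm.mp hM.isHermitian)
  rw [← conjTranspose_eq_transpose_of_trivial] at htwice
  refine ⟨?_, ?_⟩
  · have := (hM.posSemidef.mul_mul_conjTranspose_same (1 - R)).trace_nonneg
    linarith
  · rw [← mul_eq_zero_iff_left two_ne_zero, htwice, hM.trace_mul_mul_conjTranspose_eq_zero_iff,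
      sub_eq_zero, eq_comm]

end Matrix

theorem stmt3_general (R M : Matrix (Fin 3) (Fin 3) ℝ)
    (hR : SO3 R) (hMpd : M.PosDef) :
    0 ≤ Matrix.trace ((1 - R) * M) ∧
    (Matrix.trace ((1 - R) * M) = 0 ↔ R = 1) ∧
    (R ≠ 1 → 0 < (1 / 4 : ℝ) * Matrix.trace ((1 - R) * M)) ∧
    ((1 / 4 : ℝ) * Matrix.trace ((1 - R) * M) = 0 ↔ R = 1) := by
  obtain ⟨hnonneg, hzero⟩ := trace_one_sub_orthogonal_mul_posDef hR.2.1 hMpd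
  refine ⟨hnonneg, hzero, fun hne => ?_, by rw [mul_eq_zero_iff_left (by norm_num), hzero]⟩
  have := hnonneg.lt_of_ne' (hzero.not.mpr hne)
  positivity

/-- For `R ∈ SO(3)` and `M` symmetric positive definite,
`Tr((I₃ − R)M) ≥ 0` with equality iff `R = I₃`; hence
`e_R = (1/4)·Tr((I₃ − R)M)` is positive for `R ≠ I₃` and vanishes only at
`R = I₃`. -/
theorem stmt3 (R M : Matrix (Fin 3) (Fin 3) ℝ)
    (hR : SO3 R) (hMsymm : M.IsSymm) (hMpd : M.PosDef) :
    0 ≤ Matrix.trace ((1 - R) * M) ∧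
    (Matrix.trace ((1 - R) * M) = 0 ↔ R = 1) ∧
    (R ≠ 1 → 0 < (1 / 4 : ℝ) * Matrix.trace ((1 - R) * M)) ∧
    ((1 / 4 : ℝ) * Matrix.trace ((1 - R) * M) = 0 ↔ R = 1) :=
  stmt3_general R M hR hMpd
end
end

section
/- Let R, R̂ ∈ SO(3), let u₁, …, u_m ∈ ℝ³ be unit vectors and s₁, …, s_m ≥ 0. Set M = Σⱼ sⱼ uⱼ uⱼᵀ, and, for each j, set vⱼ = Rᵀuⱼ and v̂ⱼ = R̂ᵀuⱼ, and let R̃ = R̂Rᵀ. Then [ R̂·Σⱼ (sⱼ/2)·(v̂ⱼ × vⱼ) ]_× = P_a(R̃M); equivalently, vex(P_a(R̃M)) = R̂·Σⱼ (sⱼ/2)·(v̂ⱼ × vⱼ). -/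
open Matrix

noncomputable section

/- A rotation commutes with the cross product, so
`R̂ (v̂ⱼ × vⱼ) = uⱼ × R̃uⱼ`, and `[a × b]ₓ = b aᵀ - a bᵀ` turns this into
`2 P_a(R̃uⱼuⱼᵀ)`; both sides are linear in the data `(sⱼ)`. -/

theorem cross_mulVec_mulVec {K : Type*} [CommRing K] (A : Matrix (Fin 3) (Fin 3) K)
    (a b : Fin 3 → K) :
    (A *ᵥ a) ⨯₃ (A *ᵥ b) = A.adjugateᵀ *ᵥ (a ⨯₃ b) := by
  ext i
  fin_cases i <;>
    simp [adjugate_fin_three, cross_apply, mulVec, dotProduct, Fin.sum_univ_three] <;> ring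

theorem SO3.adjugate_eq_transpose {R : Matrix (Fin 3) (Fin 3) ℝ} (hR : SO3 R) :
    R.adjugate = Rᵀ := by
  calc R.adjugate = (Rᵀ * R) * R.adjugate := by rw [hR.2.1, one_mul]
    _ = Rᵀ := by rw [Matrix.mul_assoc, mul_adjugate, hR.2.2, one_smul, mul_one]

theorem SO3.mulVec_cross {R : Matrix (Fin 3) (Fin 3) ℝ} (hR : SO3 R) (a b : Fin 3 → ℝ) :
    R *ᵥ (a ⨯₃ b) = (R *ᵥ a) ⨯₃ (R *ᵥ b) := by
  rw [cross_mulVec_mulVec, hR.adjugate_eq_transpose, transpose_transpose]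

@[simps]
def skewLinearMap : (Fin 3 → ℝ) →ₗ[ℝ] Matrix (Fin 3) (Fin 3) ℝ where
  toFun := skew
  map_add' a b := by ext i j; fin_cases i <;> fin_cases j <;> simp [skew] <;> ring
  map_smul' t a := by ext i j; fin_cases i <;> fin_cases j <;> simp [skew]

@[simps]
def PaLinearMap : Matrix (Fin 3) (Fin 3) ℝ →ₗ[ℝ] Matrix (Fin 3) (Fin 3) ℝ where
  toFun := Pa
  map_add' X Y := by simp only [Pa, transpose_add]; module
  map_smul' t X := by simp only [Pa, transpose_smul, RingHom.id_apply]; module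

theorem skew_cross (a b : Fin 3 → ℝ) : skew (a ⨯₃ b) = vecMulVec b a - vecMulVec a b := by
  ext i j
  fin_cases i <;> fin_cases j <;> simp [skew, cross_apply, vecMulVec] <;> ring

theorem Pa_vecMulVec (a b : Fin 3 → ℝ) : Pa (vecMulVec a b) = (1 / 2 : ℝ) • skew (b ⨯₃ a) := by
  rw [Pa, skew_cross, transpose_vecMulVec]

theorem vex_skew (a : Fin 3 → ℝ) : vex (skew a) = a := by
  ext i; fin_cases i <;> rfl

theorem stmt5_general (m : ℕ) (R Rh : Matrix (Fin 3) (Fin 3) ℝ)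
    (hRh : SO3 Rh)
    (u : Fin m → Fin 3 → ℝ)
    (s : Fin m → ℝ)
    (M : Matrix (Fin 3) (Fin 3) ℝ)
    (hM : M = ∑ j, s j • Matrix.vecMulVec (u j) (u j)) :
    skew (Rh *ᵥ ∑ j, (s j / 2) • (crossProduct (Rhᵀ *ᵥ u j) (Rᵀ *ᵥ u j)))
      = Pa ((Rh * Rᵀ) * M) ∧
    vex (Pa ((Rh * Rᵀ) * M))
      = Rh *ᵥ ∑ j, (s j / 2) • (crossProduct (Rhᵀ *ᵥ u j) (Rᵀ *ᵥ u j)) := by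
  have hrot : ∀ j, Rh *ᵥ ((Rhᵀ *ᵥ u j) ⨯₃ (Rᵀ *ᵥ u j)) = u j ⨯₃ ((Rh * Rᵀ) *ᵥ u j) := by
    intro j
    rw [hRh.mulVec_cross, mulVec_mulVec, mulVec_mulVec, hRh.1, one_mulVec]
  have hskew : skew (Rh *ᵥ ∑ j, (s j / 2) • (Rhᵀ *ᵥ u j) ⨯₃ (Rᵀ *ᵥ u j))
      = Pa ((Rh * Rᵀ) * M) := by
    change skewLinearMap _ = PaLinearMap _
    simp only [hM, mulVec_sum, mulVec_smul, hrot, Finset.mul_sum, Matrix.mul_smul, mul_vecMulVec,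
      map_sum, map_smul, skewLinearMap_apply, PaLinearMap_apply]
    refine Finset.sum_congr rfl fun j _ => ?_
    rw [Pa_vecMulVec, smul_smul]
    congr 1
    ring
  exact ⟨hskew, by rw [← hskew, vex_skew]⟩

/-- With `M = Σⱼ sⱼ uⱼuⱼᵀ`, `vⱼ = Rᵀuⱼ`, `v̂ⱼ = R̂ᵀuⱼ`,
`R̃ = R̂Rᵀ`, one has `[R̂·Σⱼ(sⱼ/2)(v̂ⱼ × vⱼ)]ₓ = P_a(R̃M)`, equivalently
`vex(P_a(R̃M)) = R̂·Σⱼ(sⱼ/2)(v̂ⱼ × vⱼ)`. -/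
theorem stmt5 (m : ℕ) (R Rh : Matrix (Fin 3) (Fin 3) ℝ)
    (hR : SO3 R) (hRh : SO3 Rh)
    (u : Fin m → Fin 3 → ℝ) (hu : ∀ j, ∑ i, (u j i) ^ 2 = 1)
    (s : Fin m → ℝ) (hs : ∀ j, 0 ≤ s j)
    (M : Matrix (Fin 3) (Fin 3) ℝ)
    (hM : M = ∑ j, s j • Matrix.vecMulVec (u j) (u j)) :
    skew (Rh *ᵥ ∑ j, (s j / 2) • (crossProduct (Rhᵀ *ᵥ u j) (Rᵀ *ᵥ u j)))
      = Pa ((Rh * Rᵀ) * M) ∧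
    vex (Pa ((Rh * Rᵀ) * M))
      = Rh *ᵥ ∑ j, (s j / 2) • (crossProduct (Rhᵀ *ᵥ u j) (Rᵀ *ᵥ u j)) :=
  stmt5_general m R Rh hRh u s M hM
end
end

section
/- Let R̂ ∈ SO(3), let n ≥ 3, and let y₁, …, y_n ∈ ℝ³ be such that some three of them are non-collinear (i.e., there exist indices i, j, k with yⱼ − yᵢ and y_k − yᵢ linearly independent). Then the 3n×6 matrix Q whose i-th 3×6 block row is [ R̂[yᵢ]_× , −R̂ ] has trivial kernel (full column rank 6): if [yᵢ]_× Ω − V = 0 for all i, with Ω, V ∈ ℝ³, then Ω = 0 and V = 0. -/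
open Matrix

noncomputable section

lemma exists_smul_eq_of_cross_eq_zero {F : Type*} [Field F] {a w : Fin 3 → F}
    (hw : w ≠ 0) (h : a ⨯₃ w = 0) : ∃ s : F, s • w = a := by
  have hdep : ¬LinearIndependent F ![w, a] := by
    rw [← crossProduct_ne_zero_iff_linearIndependent, ← cross_anticomm, h, neg_zero, not_not]
  simpa [LinearIndependent.pair_iff' hw] using hdep

lemma eq_zero_of_cross_eq_zero_of_linearIndependent {F : Type*} [Field F] {a b w : Fin 3 → F}
    (hab : LinearIndependent F ![a, b]) (ha : a ⨯₃ w = 0) (hb : b ⨯₃ w = 0) : w = 0 := by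
  by_contra hw
  obtain ⟨s, rfl⟩ := exists_smul_eq_of_cross_eq_zero hw ha
  obtain ⟨t, rfl⟩ := exists_smul_eq_of_cross_eq_zero hw hb
  apply crossProduct_ne_zero_iff_linearIndependent.mpr hab
  rw [map_smul, ha, smul_zero]

lemma skew_mulVec (a b : Fin 3 → ℝ) : skew a *ᵥ b = a ⨯₃ b := by
  ext i
  fin_cases i <;> simp [skew, cross_apply, mulVec, dotProduct, Fin.sum_univ_three] <;> ring

theorem stmt9_general (n : ℕ)
    (y : Fin n → Fin 3 → ℝ)
    (hnc : ∃ i j k : Fin n, LinearIndependent ℝ ![y j - y i, y k - y i])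
    (Ω V : Fin 3 → ℝ)
    (h : ∀ i, skew (y i) *ᵥ Ω - V = 0) :
    Ω = 0 ∧ V = 0 := by
  obtain ⟨i, j, k, hli⟩ := hnc
  have hcross : ∀ m, y m ⨯₃ Ω = V := fun m => by
    rw [← skew_mulVec, ← sub_eq_zero, h m]
  have hdiff : ∀ m, (y m - y i) ⨯₃ Ω = 0 := fun m => by
    rw [map_sub, LinearMap.sub_apply, hcross, hcross, sub_self]
  have hΩ : Ω = 0 := eq_zero_of_cross_eq_zero_of_linearIndependent hli (hdiff j) (hdiff k)
  refine ⟨hΩ, ?_⟩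
  rw [← hcross i, hΩ, map_zero]

/-- If `n ≥ 3` landmarks `y₁,…,yₙ` contain three non-collinear
points, then the `3n×6` matrix `Q` with block rows `[R̂[yᵢ]ₓ, −R̂]` has trivial
kernel: `[yᵢ]ₓΩ − V = 0` for all `i` forces `Ω = 0` and `V = 0`. -/
theorem stmt9 (n : ℕ) (hn : 3 ≤ n)
    (Rh : Matrix (Fin 3) (Fin 3) ℝ) (hRh : SO3 Rh)
    (y : Fin n → Fin 3 → ℝ)
    (hnc : ∃ i j k : Fin n, LinearIndependent ℝ ![y j - y i, y k - y i])
    (Ω V : Fin 3 → ℝ)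
    (h : ∀ i, skew (y i) *ᵥ Ω - V = 0) :
    Ω = 0 ∧ V = 0 :=
  stmt9_general n y hnc Ω V h
end
end
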